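/- Let w be an aperiodic infinite word over a two-letter alphabet that is a fixed point of a primitive m-uniform morphism (m ≥ 2). Then there is a constant C = C(w) such that for all n ∈ ℕ and k ≥ 1, w contains a k-anti-power with block length at most C·k beginning at its n-th position. -/

import Mathlib

/-!
Since `w` is binary and aperiodic, `σ` is injective, and all three of the factors `aa`, `ab`,
`ba` occur in `w`; by primitivity every prefix of `w` recurs with bounded gaps. If a long factor
of `w` occurs at two positions `x < x + δ` with `m ∤ δ`, then, with `c = δ % m`, each window
`σ(u).drop c ++ σ(v).take c` for an occurring factor `uv` reappears inside the repetition as an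
aligned block, i.e. as an image `σ(e)`. For the windows of `aa`, `ab` and `ba` this forces
`σ(a) = σ(b)`: their first `m - c` letters agree by an induction along the windows, and their
last `c` letters by the same argument for the reversed words. So two occurrences of a factor of
some length `L` are congruent modulo `m`, and desubstituting with the injective `σ`, occurrences of a factor of
length about `L m^t` are congruent modulo `m^t`.
Take `k ≤ m^t ≤ m k` and the block length `d = (L + 4) m^t + 1`: two equal blocks `i ≠ j < k`
would give `i d ≡ j d`, hence `i ≡ j [MOD m^t]`, which is impossible.
-/

/-- Extension of a substitution (given by its images of letters) to finite words. -/
def substWord {A : Type*} (σ : A → List A) (w : List A) : List A :=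
  w.flatMap σ

/-- `substIter σ n a` is the word `σ^n(a)`. -/
def substIter {A : Type*} (σ : A → List A) (n : ℕ) (a : A) : List A :=
  (substWord σ)^[n] [a]

/-- `σ` is `m`-uniform: every letter has image of length `m`. -/
def IsUniform {A : Type*} (σ : A → List A) (m : ℕ) : Prop :=
  ∀ a, (σ a).length = m

/-- `σ` is primitive: some power `σ^n` maps every letter to a word containing every letter. -/
def IsPrimitive {A : Type*} (σ : A → List A) : Prop :=
  ∃ n, 1 ≤ n ∧ ∀ a b, b ∈ substIter σ n a

/-- Application of an `m`-uniform substitution to an infinite word, letter by letter. -/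
def substInf {A : Type*} [Inhabited A] (σ : A → List A) (m : ℕ) (x : ℕ → A) : ℕ → A :=
  fun n => (σ (x (n / m))).getD (n % m) default

/-- The factor `x[i .. i+len-1]` of an infinite word `x`. -/
def subword {A : Type*} (x : ℕ → A) (i len : ℕ) : List A :=
  (List.range len).map fun j => x (i + j)

/-- `w` is a factor of the infinite word `x`. -/
def FactorOf {A : Type*} (w : List A) (x : ℕ → A) : Prop :=
  ∃ i, subword x i w.length = w

/-- An infinite word is eventually periodic. -/
def EventuallyPeriodic {A : Type*} (x : ℕ → A) : Prop :=
  ∃ p, 1 ≤ p ∧ ∃ N, ∀ n, N ≤ n → x (n + p) = x n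

/-- An infinite word is aperiodic if it is not eventually periodic. -/
def IsAperiodic {A : Type*} (x : ℕ → A) : Prop :=
  ¬ EventuallyPeriodic x

/-- The shift orbit closure of an infinite word, in the product topology on `ℕ → A`. -/
def shiftOrbitClosure {A : Type*} [TopologicalSpace A] (x : ℕ → A) : Set (ℕ → A) :=
  closure {y | ∃ n : ℕ, y = fun k => x (k + n)}

/-- `y` contains a `k`-anti-power with block length `d` starting at position `n`:
the `k` consecutive blocks of length `d` starting at `n` are pairwise distinct. -/
def HasAntipower {A : Type*} (y : ℕ → A) (n k d : ℕ) : Prop :=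
  ∀ i < k, ∀ j < k, i ≠ j →
    subword y (n + i * d) d ≠ subword y (n + j * d) d

open Function

section Subword

variable {A : Type*} (x : ℕ → A)

@[simp]
theorem length_subword (i n : ℕ) : (subword x i n).length = n := by
  simp [subword]

theorem subword_eq_subword_iff {i j n : ℕ} :
    subword x i n = subword x j n ↔ ∀ k < n, x (i + k) = x (j + k) := by
  simp [subword, List.map_inj_left]

theorem subword_add (i a b : ℕ) :
    subword x i (a + b) = subword x i a ++ subword x (i + a) b := by
  simp [subword, List.range_add, add_assoc]

theorem subword_one (i : ℕ) : subword x i 1 = [x i] := by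
  simp [subword]

variable {x}

theorem subword_add_eq_of_subword_eq {i j n : ℕ} (h : subword x i n = subword x j n)
    {o l : ℕ} (hol : o + l ≤ n) : subword x (i + o) l = subword x (j + o) l := by
  rw [subword_eq_subword_iff] at h ⊢
  intro k hk
  simpa [add_assoc] using h (o + k) (by omega)

end Subword

section FixedPoint

variable {A : Type*} [Inhabited A] {σ : A → List A} {m : ℕ} {w : ℕ → A}

theorem apply_mul_add_of_fixed (hfix : substInf σ m w = w) {j : ℕ} (hj : j < m) (q : ℕ) :
    w (m * q + j) = (σ (w q)).getD j default := by
  have hdiv : (m * q + j) / m = q := by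
    rw [Nat.mul_add_div (by omega), Nat.div_eq_of_lt hj, add_zero]
  have hmod : (m * q + j) % m = j := by
    rw [Nat.mul_add_mod, Nat.mod_eq_of_lt hj]
  conv_lhs => rw [← hfix]
  simp only [substInf, hdiv, hmod]

theorem subword_mul_of_fixed (hunif : IsUniform σ m) (hfix : substInf σ m w = w) (q : ℕ) :
    subword w (m * q) m = σ (w q) := by
  refine List.ext_getElem (by simp [hunif (w q)]) fun j hj hj' => ?_
  simp only [length_subword] at hj
  simp [subword, apply_mul_add_of_fixed hfix hj, List.getElem?_eq_getElem hj']

theorem subword_mul_mul_of_fixed (hunif : IsUniform σ m) (hfix : substInf σ m w = w)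
    (i k : ℕ) : subword w (m * i) (m * k) = substWord σ (subword w i k) := by
  induction k with
  | zero => simp [subword, substWord]
  | succ k ih =>
    rw [mul_add_one, subword_add, ih, ← mul_add, subword_mul_of_fixed hunif hfix,
      subword_add, subword_one, substWord, substWord, List.flatMap_append]
    simp

theorem subword_pow_mul_of_fixed (hunif : IsUniform σ m) (hfix : substInf σ m w = w)
    (t q : ℕ) : subword w (m ^ t * q) (m ^ t) = substIter σ t (w q) := by
  suffices ∀ i k, subword w (m ^ t * i) (m ^ t * k) = (substWord σ)^[t] (subword w i k) by
    simpa [substIter, subword_one] using this q 1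
  induction t with
  | zero => simp
  | succ t ih =>
    intro i k
    rw [pow_succ, mul_assoc, mul_assoc, ih, subword_mul_mul_of_fixed hunif hfix,
      iterate_succ_apply]

theorem subword_mul_add_of_fixed (hunif : IsUniform σ m) (hfix : substInf σ m w = w)
    {c : ℕ} (hc : c ≤ m) (q : ℕ) :
    subword w (m * q + c) m = (σ (w q)).drop c ++ (σ (w (q + 1))).take c := by
  obtain ⟨r, rfl⟩ := Nat.exists_eq_add_of_le hc
  have hdrop : (σ (w q)).drop c = subword w ((c + r) * q + c) r := by
    rw [← subword_mul_of_fixed hunif hfix q, subword_add w _ c r, List.drop_left' (by simp)]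
  have htake : (σ (w (q + 1))).take c = subword w ((c + r) * q + c + r) c := by
    rw [← subword_mul_of_fixed hunif hfix (q + 1), subword_add w _ c r,
      List.take_left' (by simp)]
    ring_nf
  rw [hdrop, htake, ← subword_add, add_comm r c]

theorem exists_prefix_occurrence_in_window (hm : 1 < m) (hunif : IsUniform σ m)
    (hprim : IsPrimitive σ) (hfix : substInf σ m w = w) (N : ℕ) :
    ∃ R, ∀ M, ∃ z, M ≤ z ∧ z < M + R ∧ subword w z N = subword w 0 N := by
  obtain ⟨n₀, -, hn₀⟩ := hprim
  set P := m ^ N * m ^ n₀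
  have hP : 0 < P := by positivity
  refine ⟨2 * P, fun M => ?_⟩
  set g := M / P + 1
  obtain ⟨i, hi, hwi⟩ : ∃ i < m ^ n₀, w (m ^ n₀ * g + i) = w 0 := by
    have := hn₀ (w g) (w 0)
    rw [← subword_pow_mul_of_fixed hunif hfix] at this
    simpa [subword] using this
  refine ⟨m ^ N * (m ^ n₀ * g + i), ?_, ?_, ?_⟩
  · refine le_of_lt ?_
    calc M < P * g := Nat.lt_mul_div_succ M hP
      _ = m ^ N * (m ^ n₀ * g) := by ring
      _ ≤ m ^ N * (m ^ n₀ * g + i) := Nat.mul_le_mul_left _ (by omega)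
  · have hend : m ^ N * (m ^ n₀ * g + i) < P * (M / P) + 2 * P :=
      calc m ^ N * (m ^ n₀ * g + i) < m ^ N * (m ^ n₀ * g + m ^ n₀) :=
            Nat.mul_lt_mul_of_pos_left (by omega) (by positivity)
        _ = P * (M / P) + 2 * P := by ring
    have := Nat.mul_div_le M P
    omega
  · have hblock := subword_pow_mul_of_fixed hunif hfix N (m ^ n₀ * g + i)
    rw [hwi, ← subword_pow_mul_of_fixed hunif hfix N 0, mul_zero] at hblock
    simpa using subword_add_eq_of_subword_eq hblock (o := 0)
      (by simpa using (Nat.lt_pow_self hm).le)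

end FixedPoint

section Straddle

variable {α : Type*} {s t : List α} {m c : ℕ}

theorem take_eq_take_of_straddles (hs : s.length = m) (ht : t.length = m) (hc : 0 < c)
    (hss : s.drop c ++ s.take c ∈ [s, t]) (hst : s.drop c ++ t.take c ∈ [s, t])
    (hts : t.drop c ++ s.take c ∈ [s, t]) : s.take (m - c) = t.take (m - c) := by
  by_contra hne
  -- both windows begin with `s.drop c`, so they cannot be the two different words `s`, `t`
  have hsame : s.drop c ++ s.take c = s.drop c ++ t.take c := by
    have h₁ : (s.drop c ++ s.take c).take (m - c) = s.drop c := List.take_left' (by simp [hs])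
    have h₂ : (s.drop c ++ t.take c).take (m - c) = s.drop c := List.take_left' (by simp [hs])
    simp only [List.mem_cons, List.not_mem_nil, or_false] at hss hst
    rcases hss with hss | hss <;> rcases hst with hst | hst
    · rw [hss, hst]
    · rw [hss] at h₁; rw [hst] at h₂; exact absurd (h₁.trans h₂.symm) hne
    · rw [hss] at h₁; rw [hst] at h₂; exact absurd (h₂.trans h₁.symm) hne
    · rw [hss, hst]
  have hprefix : s.take c = t.take c := List.append_cancel_left hsame
  refine hne (congrArg _ (List.ext_getElem? fun j => ?_))
  induction j using Nat.strong_induction_on with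
  | _ j ih =>
    rcases lt_or_ge j c with hjc | hjc
    · simpa [List.getElem?_take, hjc] using congrArg (·[j]?) hprefix
    obtain ⟨i, rfl⟩ := Nat.exists_eq_add_of_le hjc
    rcases lt_or_ge i (m - c) with hi | hi
    · have hs' : s[c + i]? = (s.drop c ++ s.take c)[i]? := by
        rw [List.getElem?_append_left (by simp [hs]; omega), List.getElem?_drop]
      have ht' : t[c + i]? = (t.drop c ++ s.take c)[i]? := by
        rw [List.getElem?_append_left (by simp [ht]; omega), List.getElem?_drop]
      have hu : ∀ u ∈ [s, t], u[i]? = s[i]? := by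
        simp [ih i (by omega)]
      rw [hs', ht', hu _ hss, hu _ hts]
    · rw [List.getElem?_eq_none (by omega), List.getElem?_eq_none (by omega)]

theorem reverse_drop_append_reverse_take {u v : List α} (hu : u.length = m) (hv : v.length = m)
    (hc : c ≤ m) :
    u.reverse.drop (m - c) ++ v.reverse.take (m - c) = (v.drop c ++ u.take c).reverse := by
  rw [List.drop_reverse, List.take_reverse, List.reverse_append, hu, hv, Nat.sub_sub_self hc]

theorem eq_of_straddles (hs : s.length = m) (ht : t.length = m) (hc : 0 < c) (hcm : c < m)
    (hss : s.drop c ++ s.take c ∈ [s, t]) (hst : s.drop c ++ t.take c ∈ [s, t])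
    (hts : t.drop c ++ s.take c ∈ [s, t]) : s = t := by
  have hprefix := take_eq_take_of_straddles hs ht hc hss hst hts
  have hrev : ∀ u ∈ [s, t], u.reverse ∈ [s.reverse, t.reverse] := by
    simp only [List.mem_cons, List.not_mem_nil, or_false]
    rintro u (rfl | rfl) <;> simp
  have hsuffix := take_eq_take_of_straddles (s := s.reverse) (t := t.reverse) (m := m)
    (c := m - c) (by simp [hs]) (by simp [ht]) (by omega)
    (by rw [reverse_drop_append_reverse_take hs hs hcm.le]; exact hrev _ hss)
    (by rw [reverse_drop_append_reverse_take hs ht hcm.le]; exact hrev _ hts)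
    (by rw [reverse_drop_append_reverse_take ht hs hcm.le]; exact hrev _ hst)
  rw [Nat.sub_sub_self hcm.le, List.take_reverse, List.take_reverse, hs, ht,
    List.reverse_inj] at hsuffix
  rw [← List.take_append_drop (m - c) s, ← List.take_append_drop (m - c) t, hprefix, hsuffix]

end Straddle

theorem exists_apply_eq_and_apply_succ_ne {A : Type*} {x : ℕ → A} {a : A} {i j : ℕ}
    (hij : i ≤ j) (hi : x i = a) (hj : x j ≠ a) : ∃ p, x p = a ∧ x (p + 1) ≠ a := by
  induction j, hij using Nat.le_induction with
  | base => exact absurd hi hj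
  | succ j _ ih =>
    by_cases hxj : x j = a
    · exact ⟨j, hxj, hj⟩
    · exact ih hxj

section Binary

variable {w : ℕ → Fin 2}

theorem IsAperiodic.exists_ge_apply_eq (haper : IsAperiodic w) (a : Fin 2) (N : ℕ) :
    ∃ n, N ≤ n ∧ w n = a := by
  by_contra! h
  have hbin : ∀ a x y : Fin 2, x ≠ a → y ≠ a → x = y := by decide
  have hconst : ∀ n, N ≤ n → w n = w N := fun n hn => hbin a _ _ (h n hn) (h N le_rfl)
  exact haper ⟨1, le_rfl, N, fun n hn => (hconst (n + 1) (by omega)).trans (hconst n hn).symm⟩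

theorem IsAperiodic.exists_apply_succ_eq (haper : IsAperiodic w) : ∃ p, w (p + 1) = w p := by
  by_contra! h
  have hbin : ∀ x y z : Fin 2, y ≠ x → z ≠ y → z = x := by decide
  exact haper ⟨2, by norm_num, 0, fun n _ => hbin _ _ _ (h n) (h (n + 1))⟩

theorem IsAperiodic.exists_square_and_transitions (haper : IsAperiodic w) :
    ∃ a b : Fin 2, a ≠ b ∧ (∃ p, w p = a ∧ w (p + 1) = a) ∧
      (∃ p, w p = a ∧ w (p + 1) = b) ∧ (∃ p, w p = b ∧ w (p + 1) = a) := by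
  have hbin : ∀ x y z : Fin 2, x ≠ y → z ≠ x → z = y := by decide
  have hother : ∀ a : Fin 2, ∃ b, a ≠ b := by decide
  obtain ⟨p₁, hp₁⟩ := haper.exists_apply_succ_eq
  obtain ⟨b, hab⟩ := hother (w p₁)
  obtain ⟨n, hn, hwn⟩ := haper.exists_ge_apply_eq b p₁
  obtain ⟨p₂, hp₂, hp₂'⟩ := exists_apply_eq_and_apply_succ_ne hn rfl (hwn ▸ hab.symm)
  obtain ⟨n', hn', hwn'⟩ := haper.exists_ge_apply_eq (w p₁) n
  obtain ⟨p₃, hp₃, hp₃'⟩ := exists_apply_eq_and_apply_succ_ne hn' hwn (hwn' ▸ hab)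
  exact ⟨w p₁, b, hab, ⟨p₁, rfl, hp₁⟩, ⟨p₂, hp₂, hbin _ _ _ hab hp₂'⟩,
    ⟨p₃, hp₃, hbin _ _ _ hab.symm hp₃'⟩⟩

theorem injective_of_fixed_of_isAperiodic {σ : Fin 2 → List (Fin 2)} {m : ℕ} (hm : 0 < m)
    (hfix : substInf σ m w = w) (haper : IsAperiodic w) : Injective σ := by
  intro a b hab
  by_contra hne
  have hbin : ∀ a b x : Fin 2, a ≠ b → x = a ∨ x = b := by decide
  have hconst : ∀ x, σ x = σ a := fun x => by
    rcases hbin a b x hne with rfl | rfl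
    exacts [rfl, hab.symm]
  refine haper ⟨m, hm, 0, fun n _ => ?_⟩
  have hn := apply_mul_add_of_fixed hfix (Nat.mod_lt n hm)
  calc w (n + m) = w (m * (n / m + 1) + n % m) := by
        rw [mul_add_one, add_right_comm, Nat.div_add_mod]
    _ = w (m * (n / m) + n % m) := by rw [hn, hn, hconst, hconst (w _)]
    _ = w n := by rw [Nat.div_add_mod]

end Binary

section Synchronization

variable {A : Type*} [Inhabited A] {σ : A → List A} {m : ℕ} {w : ℕ → A}

theorem exists_subword_eq_of_subword_eq_shift (hm : 0 < m) (hunif : IsUniform σ m)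
    (hfix : substInf σ m w = w) {R N : ℕ}
    (hrec : ∀ M, ∃ z, M ≤ z ∧ z < M + R ∧ subword w z N = subword w 0 N)
    {x δ ℓ : ℕ} (hℓ : m * (R + N + 2) ≤ ℓ) (h : subword w x ℓ = subword w (x + δ) ℓ)
    {p : ℕ} (hp : p + 2 ≤ N) : ∃ e, subword w (m * p + δ % m) m = σ e := by
  obtain ⟨z, hz, hzR, hzN⟩ := hrec (x / m + 1 + δ / m)
  have hxm₀ := Nat.zero_le (x / m)
  rw [subword_eq_subword_iff] at hzN
  have hp₀ : w (z + p) = w p := by simpa using hzN p (by omega)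
  have hp₁ : w (z + p + 1) = w (p + 1) := by simpa [add_assoc] using hzN (p + 1) (by omega)
  -- `m * (z + p) + δ % m` is `δ` past the aligned block `m * q` inside the repetition
  set q := z + p - δ / m
  have hq : m * (x / m) + m ≤ m * q :=
    calc m * (x / m) + m = m * (x / m + 1) := by ring
      _ ≤ m * q := Nat.mul_le_mul_left m (by omega)
  have hqR : m * q + m ≤ m * (x / m) + m * (R + N + 2) :=
    calc m * q + m = m * (q + 1) := by ring
      _ ≤ m * (x / m + (R + N + 2)) := Nat.mul_le_mul_left m (by omega)
      _ = m * (x / m) + m * (R + N + 2) := by ring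
  have hzq : m * (z + p) = m * q + m * (δ / m) := by
    rw [← mul_add]
    congr 1
    omega
  have hx := Nat.div_add_mod x m
  have hδ := Nat.div_add_mod δ m
  have hxm := Nat.mod_lt x hm
  have hc := (Nat.mod_lt δ hm).le
  refine ⟨w q, ?_⟩
  calc subword w (m * p + δ % m) m
      = (σ (w p)).drop (δ % m) ++ (σ (w (p + 1))).take (δ % m) :=
        subword_mul_add_of_fixed hunif hfix hc p
    _ = subword w (m * (z + p) + δ % m) m := by
        rw [subword_mul_add_of_fixed hunif hfix hc, hp₀, hp₁]
    _ = subword w (x + δ + (m * q - x)) m := by congr 1; omega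
    _ = subword w (x + (m * q - x)) m := (subword_add_eq_of_subword_eq h (by omega)).symm
    _ = σ (w q) := by rw [Nat.add_sub_cancel' (by omega), subword_mul_of_fixed hunif hfix]

theorem subword_div_eq_of_modEq (hm : 0 < m) (hunif : IsUniform σ m) (hinj : Injective σ)
    (hfix : substInf σ m w = w) {x y ℓ : ℕ} (h : subword w x ℓ = subword w y ℓ)
    (hxy : x ≡ y [MOD m]) :
    subword w (x / m + 1) (ℓ / m - 2) = subword w (y / m + 1) (ℓ / m - 2) := by
  rw [subword_eq_subword_iff]
  intro i hi
  apply hinj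
  have hx := Nat.div_add_mod x m
  have hy := Nat.div_add_mod y m
  have hxm := Nat.mod_lt x hm
  have hxy' : x % m = y % m := hxy
  have hℓ : m * i + 3 * m ≤ ℓ :=
    calc m * i + 3 * m = m * (i + 3) := by ring
      _ ≤ m * (ℓ / m) := Nat.mul_le_mul_left m (by omega)
      _ ≤ ℓ := Nat.mul_div_le ℓ m
  have hx' : m * (x / m + 1 + i) = x + (m - x % m + m * i) := by
    rw [mul_add, mul_add, mul_one]
    omega
  have hy' : m * (y / m + 1 + i) = y + (m - x % m + m * i) := by
    rw [mul_add, mul_add, mul_one]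
    omega
  rw [← subword_mul_of_fixed hunif hfix, ← subword_mul_of_fixed hunif hfix, hx', hy']
  exact subword_add_eq_of_subword_eq h (by omega)

theorem modEq_pow_of_subword_eq (hm : 1 < m) (hunif : IsUniform σ m) (hinj : Injective σ)
    (hfix : substInf σ m w = w) {L : ℕ}
    (hsync : ∀ x y ℓ, L ≤ ℓ → subword w x ℓ = subword w y ℓ → x ≡ y [MOD m]) (t : ℕ) :
    ∀ x y ℓ, (L + 4) * m ^ t ≤ ℓ + 4 → subword w x ℓ = subword w y ℓ →
      x ≡ y [MOD m ^ t] := by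
  induction t with
  | zero => exact fun _ _ _ _ _ => by simp [Nat.modEq_one]
  | succ t ih =>
    intro x y ℓ hℓ h
    have hmt : 0 < m ^ t := by positivity
    have hL : L + 4 ≤ (L + 4) * m ^ (t + 1) := Nat.le_mul_of_pos_right _ (by positivity)
    have hxy : x ≡ y [MOD m] := hsync x y ℓ (by omega) h
    have hℓ' : (L + 4) * m ^ t ≤ ℓ / m - 2 + 4 := by
      have hlt : (L + 4) * m ^ t * m < (ℓ / m + 3) * m := by
        nlinarith [Nat.lt_mul_div_succ ℓ (by omega : 0 < m), pow_succ m t]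
      have := Nat.lt_of_mul_lt_mul_right hlt
      omega
    have hdiv := ih _ _ _ hℓ' (subword_div_eq_of_modEq (by omega) hunif hinj hfix h hxy)
    have hmul := (Nat.ModEq.add_right_cancel' 1 hdiv).mul_left' m
    rw [← pow_succ'] at hmul
    calc x = m * (x / m) + x % m := (Nat.div_add_mod x m).symm
      _ ≡ m * (y / m) + x % m [MOD m ^ (t + 1)] := hmul.add_right _
      _ = y := by rw [show x % m = y % m from hxy, Nat.div_add_mod]

end Synchronization

theorem exists_modEq_of_subword_eq {σ : Fin 2 → List (Fin 2)} {m : ℕ} {w : ℕ → Fin 2}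
    (hm : 1 < m) (hunif : IsUniform σ m) (hprim : IsPrimitive σ) (hfix : substInf σ m w = w)
    (haper : IsAperiodic w) :
    ∃ L, ∀ x y ℓ, L ≤ ℓ → subword w x ℓ = subword w y ℓ → x ≡ y [MOD m] := by
  obtain ⟨a, b, hab, ⟨p₁, hp₁, hp₁'⟩, ⟨p₂, hp₂, hp₂'⟩, ⟨p₃, hp₃, hp₃'⟩⟩ :=
    haper.exists_square_and_transitions
  obtain ⟨R, hR⟩ := exists_prefix_occurrence_in_window hm hunif hprim hfix (p₁ + p₂ + p₃ + 2)
  refine ⟨m * (R + (p₁ + p₂ + p₃ + 2) + 2), fun x y ℓ hℓ h => ?_⟩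
  wlog hxy : x ≤ y generalizing x y
  · exact (this y x h.symm (by omega)).symm
  obtain ⟨δ, rfl⟩ := Nat.exists_eq_add_of_le hxy
  rw [Nat.modEq_iff_dvd' hxy, Nat.add_sub_cancel_left, Nat.dvd_iff_mod_eq_zero]
  by_contra hc
  have hbin : ∀ e, σ e ∈ [σ a, σ b] := by
    have : ∀ a b e : Fin 2, a ≠ b → e = a ∨ e = b := by decide
    intro e
    rcases this a b e hab with rfl | rfl <;> simp
  have hstraddle : ∀ p, p + 2 ≤ p₁ + p₂ + p₃ + 2 →
      (σ (w p)).drop (δ % m) ++ (σ (w (p + 1))).take (δ % m) ∈ [σ a, σ b] := by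
    intro p hp
    obtain ⟨e, he⟩ := exists_subword_eq_of_subword_eq_shift (by omega) hunif hfix hR hℓ h hp
    rw [← subword_mul_add_of_fixed hunif hfix (Nat.mod_lt δ (by omega)).le, he]
    exact hbin e
  have hss := hstraddle p₁ (by omega)
  have hst := hstraddle p₂ (by omega)
  have hts := hstraddle p₃ (by omega)
  rw [hp₁, hp₁'] at hss
  rw [hp₂, hp₂'] at hst
  rw [hp₃, hp₃'] at hts
  exact hab (injective_of_fixed_of_isAperiodic (by omega) hfix haper
    (eq_of_straddles (hunif a) (hunif b) (Nat.pos_of_ne_zero hc) (Nat.mod_lt δ (by omega))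
      hss hst hts))

theorem exists_le_pow_le_mul {m k : ℕ} (hm : 1 < m) (hk : 1 ≤ k) :
    ∃ t, k ≤ m ^ t ∧ m ^ t ≤ m * k := by
  refine ⟨Nat.clog m k, Nat.le_pow_clog hm k, ?_⟩
  rcases hk.eq_or_lt with rfl | hk
  · simp only [Nat.clog_one_right, pow_zero, mul_one]
    omega
  · calc m ^ Nat.clog m k = m * m ^ (Nat.clog m k).pred := by
          rw [← pow_succ', Nat.pred_eq_sub_one, Nat.sub_add_cancel (Nat.clog_pos hm hk)]
      _ ≤ m * k := Nat.mul_le_mul_left _ (Nat.pow_pred_clog_lt_self hm hk).le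

/-- Berger–Defant, Theorem 1: if `w` is an aperiodic fixed point of a primitive
binary `m`-uniform morphism (`m ≥ 2`), then there is a constant `C = C(w)` such that for all `n`
and `k ≥ 1`, `w` contains a `k`-anti-power with block length at most `C * k` starting at
position `n`. -/
theorem antipowers_of_primitive_binary_uniform
    (σ : Fin 2 → List (Fin 2)) (m : ℕ) (hm : 2 ≤ m)
    (hunif : IsUniform σ m) (hprim : IsPrimitive σ)
    (w : ℕ → Fin 2) (hfix : substInf σ m w = w) (haper : IsAperiodic w) :
    ∃ C : ℕ, ∀ n k : ℕ, 1 ≤ k →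
      ∃ d : ℕ, 1 ≤ d ∧ d ≤ C * k ∧ HasAntipower w n k d := by
  obtain ⟨L, hsync⟩ := exists_modEq_of_subword_eq hm hunif hprim hfix haper
  have hpow := modEq_pow_of_subword_eq hm hunif
    (injective_of_fixed_of_isAperiodic (by omega) hfix haper) hfix hsync
  refine ⟨(L + 4) * m + 1, fun n k hk => ?_⟩
  obtain ⟨t, hkt, htk⟩ := exists_le_pow_le_mul hm hk
  -- `d ≡ 1 [MOD m ^ t]`, so distinct block indices below `m ^ t` give incongruent positions
  set d := (L + 4) * m ^ t + 1
  have hcop : Nat.Coprime (m ^ t) d := by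
    show Nat.Coprime (m ^ t) ((L + 4) * m ^ t + 1)
    rw [mul_comm, Nat.coprime_mul_left_add_right]
    exact Nat.coprime_one_right _
  refine ⟨d, by omega, ?_, fun i hi j hj hij heq => hij ?_⟩
  · calc d ≤ (L + 4) * (m * k) + k := add_le_add (Nat.mul_le_mul_left _ htk) hk
      _ = ((L + 4) * m + 1) * k := by ring
  · have hpos := hpow t _ _ d (by omega) heq
    exact ((Nat.ModEq.add_left_cancel' n hpos).cancel_right_of_coprime hcop).eq_of_lt_of_lt
      (by omega) (by omega)
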